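/- Let W be the dihedral group of order 2m, m ≥ 3, viewed as the Coxeter group of type I₂(m). Then the unit group of the partial Burnside ring B(W,P_W) relative to the collection of all parabolic subgroups has order 4. -/

import Mathlib

open MulAction

/-- The conjugate `g H g⁻¹` of a subgroup `H` by `g`. -/
def conjSub {G : Type*} [Group G] (g : G) (H : Subgroup G) : Subgroup G :=
  Subgroup.map (MulAut.conj g).toMonoidHom H

/-- A collection of subgroups of `G`: contains `G`, closed under intersection and conjugation. -/
def IsCollection {G : Type*} [Group G] (D : Set (Subgroup G)) : Prop :=
  ⊤ ∈ D ∧ (∀ H ∈ D, ∀ K ∈ D, H ⊓ K ∈ D) ∧ (∀ H ∈ D, ∀ g : G, conjSub g H ∈ D)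

/-- The mark vector of the transitive `G`-set `G ⧸ H`: its value at a subgroup `K` is the
number of `K`-fixed points of `G ⧸ H`.  We realize the Burnside ring inside the ring of
functions `Subgroup G → ℤ` via marks. -/
noncomputable def mark (G : Type*) [Group G] (H : Subgroup G) : Subgroup G → ℤ :=
  fun K => (Nat.card (fixedPoints K (G ⧸ H)) : ℤ)

/-- The partial Burnside ring of `G` relative to a family `D` of subgroups, realized as the
subring of `Subgroup G → ℤ` generated by the marks of the transitive `G`-sets `G ⧸ H`, `H ∈ D`. -/
noncomputable def pbr (G : Type*) [Group G] (D : Set (Subgroup G)) : Subring (Subgroup G → ℤ) :=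
  Subring.closure { f | ∃ H ∈ D, f = mark G H }

/-- A parabolic subgroup of a Coxeter system: a conjugate of a standard parabolic subgroup
`⟨J⟩`, `J ⊆ S`. -/
def IsParabolic {B W : Type*} [Group W] {M : CoxeterMatrix B} (cs : CoxeterSystem M W)
    (P : Subgroup W) : Prop :=
  ∃ (J : Set B) (g : W), P = conjSub g (Subgroup.closure (cs.simple '' J))

/-- The set of all parabolic subgroups of a Coxeter system. -/
def parabolics {B W : Type*} [Group W] {M : CoxeterMatrix B} (cs : CoxeterSystem M W) :
    Set (Subgroup W) :=
  { P | IsParabolic cs P }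


open DihedralGroup

namespace DPBR

variable {m : ℕ}

/-- The order-2 subgroup generated by the reflection `sr t`. -/
def Ht (t : ZMod m) : Subgroup (DihedralGroup m) := Subgroup.zpowers (sr t)

theorem mem_Ht {t : ZMod m} {x : DihedralGroup m} : x ∈ Ht t ↔ x = 1 ∨ x = sr t := by
  have h2 : (sr t : DihedralGroup m) ^ (2:ℤ) = 1 := by
    have := sr_mul_self t
    rw [show (2:ℤ) = 1 + 1 by norm_num, zpow_add, zpow_one]
    exact this
  constructor
  · rintro ⟨k, rfl⟩
    rcases Int.even_or_odd k with ⟨l, hl⟩ | ⟨l, hl⟩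
    · left
      show sr t ^ k = 1
      rw [hl, ← two_mul, zpow_mul, h2, one_zpow]
    · right
      show sr t ^ k = sr t
      rw [hl, zpow_add, zpow_mul, h2, one_zpow, one_mul, zpow_one]
  · rintro (rfl | rfl)
    · exact one_mem _
    · exact Subgroup.mem_zpowers _

theorem sr_ne_one {t : ZMod m} : (sr t : DihedralGroup m) ≠ 1 := by
  rw [one_def]; exact fun h => by cases h

theorem Ht_ne_bot {t : ZMod m} : Ht t ≠ ⊥ := by
  intro h
  have : (sr t : DihedralGroup m) ∈ Ht t := Subgroup.mem_zpowers _
  rw [h, Subgroup.mem_bot] at this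
  exact sr_ne_one this

/-- Classification of subgroups of the dihedral group. -/
theorem subgroup_cases (K : Subgroup (DihedralGroup m)) :
    K = ⊥ ∨ (∃ p : ZMod m, p ≠ 0 ∧ r p ∈ K) ∨ (∃ p : ZMod m, K = Ht p) := by
  by_cases hrot : ∃ p : ZMod m, p ≠ 0 ∧ r p ∈ K
  · exact Or.inr (Or.inl hrot)
  push_neg at hrot
  by_cases hrefl : ∃ p : ZMod m, sr p ∈ K
  · obtain ⟨p, hp⟩ := hrefl
    refine Or.inr (Or.inr ⟨p, ?_⟩)
    ext x
    rw [mem_Ht]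
    constructor
    · intro hx
      rcases x with q | q
      · left
        have := hrot q
        by_contra h
        have hq : q ≠ 0 := by
          intro h0; subst h0; exact h (one_def).symm
        exact (this hq) hx
      · right
        have : sr p * sr q ∈ K := K.mul_mem hp hx
        rw [sr_mul_sr] at this
        have hq : q - p = 0 := by
          by_contra h
          exact (hrot _ h) this
        have : q = p := by
          have := sub_eq_zero.mp hq
          exact this
        rw [this]
    · rintro (rfl | rfl)
      · exact K.one_mem
      · exact hp
  · push_neg at hrefl
    left
    ext x
    rw [Subgroup.mem_bot]
    constructor
    · intro hx
      rcases x with q | q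
      · by_contra h
        have hq : q ≠ 0 := fun h0 => h (by rw [h0, one_def])
        exact (hrot q hq) hx
      · exact absurd hx (hrefl q)
    · rintro rfl
      exact K.one_mem

section n2

/-- The number of solutions of `2q = x` in `ZMod m`, as an integer. -/
noncomputable def n2 (m : ℕ) (x : ZMod m) : ℤ := (Nat.card {q : ZMod m | 2 * q = x} : ℤ)

theorem n2_shift {x y e : ZMod m} (he : 2 * e = x - y) : n2 m x = n2 m y := by
  unfold n2
  congr 1
  apply Nat.card_congr
  refine ⟨fun q => ⟨q.1 - e, ?_⟩, fun q => ⟨q.1 + e, ?_⟩, fun q => ?_, fun q => ?_⟩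
  · have hq : 2 * q.1 = x := q.2
    show 2 * (q.1 - e) = y
    rw [mul_sub, hq, he]; ring
  · have hq : 2 * q.1 = y := q.2
    show 2 * (q.1 + e) = x
    rw [mul_add, hq, he]; ring
  · ext; simp
  · ext; simp

theorem n2_sol {x : ZMod m} (h : ∃ q : ZMod m, 2 * q = x) : n2 m x = n2 m 0 := by
  obtain ⟨e, he⟩ := h
  exact n2_shift (by rw [he, sub_zero])

theorem n2_unsol {x : ZMod m} (h : ¬∃ q : ZMod m, 2 * q = x) : n2 m x = 0 := by
  unfold n2
  have : {q : ZMod m | 2 * q = x} = ∅ := by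
    ext q; simp only [Set.mem_setOf_eq, Set.mem_empty_iff_false, iff_false]
    exact fun hq => h ⟨q, hq⟩
  rw [this]
  simp

theorem sol_all_odd (h : ¬ 2 ∣ m) (x : ZMod m) : ∃ q : ZMod m, 2 * q = x := by
  have hu : IsUnit ((2:ℕ) : ZMod m) := (ZMod.isUnit_prime_iff_not_dvd Nat.prime_two).mpr h
  obtain ⟨u, hu⟩ := hu
  refine ⟨(↑u⁻¹ : ZMod m) * x, ?_⟩
  have : ((2:ℕ) : ZMod m) = 2 := by norm_cast
  rw [← this, ← hu, ← mul_assoc, Units.mul_inv, one_mul]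

theorem n2_zero_odd (h : ¬ 2 ∣ m) : n2 m 0 = 1 := by
  have hu : IsUnit ((2:ℕ) : ZMod m) := (ZMod.isUnit_prime_iff_not_dvd Nat.prime_two).mpr h
  have h2 : ((2:ℕ) : ZMod m) = 2 := by norm_cast
  rw [h2] at hu
  unfold n2
  have : {q : ZMod m | 2 * q = 0} = {0} := by
    ext q
    simp only [Set.mem_setOf_eq, Set.mem_singleton_iff]
    constructor
    · intro hq
      have := (hu.mul_right_inj).mp (by rw [hq, mul_zero] : 2 * q = 2 * 0)
      exact this
    · rintro rfl; rw [mul_zero]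
  rw [this, Nat.card_coe_set_eq, Set.ncard_singleton]
  norm_num

variable [NeZero m]

theorem n2_zero_even (h2 : 2 ∣ m) (hm : 3 ≤ m) : n2 m 0 = 2 := by
  set c : ZMod m := ((m/2 : ℕ) : ZMod m) with hc
  have hmod : (2 : ZMod m) = ((2:ℕ) : ZMod m) := by norm_cast
  have hc2 : 2 * c = 0 := by
    rw [hc, hmod, ← Nat.cast_mul, Nat.mul_div_cancel' h2, ZMod.natCast_self]
  have hc0 : c ≠ 0 := by
    rw [hc, Ne, ZMod.natCast_eq_zero_iff]
    intro hdvd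
    have h1 : 0 < m / 2 := Nat.div_pos (by omega) (by norm_num)
    have h3 := Nat.le_of_dvd h1 hdvd
    omega
  unfold n2
  have hset : {q : ZMod m | 2 * q = 0} = {0, c} := by
    ext q
    simp only [Set.mem_setOf_eq, Set.mem_insert_iff, Set.mem_singleton_iff]
    constructor
    · intro hq
      have hqcast : ((q.val : ℕ) : ZMod m) = q := ZMod.natCast_rightInverse q
      have : ((2 * q.val : ℕ) : ZMod m) = 0 := by
        push_cast
        rw [← hmod] at *
        rw [hqcast]
        exact hq
      rw [ZMod.natCast_eq_zero_iff] at this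
      obtain ⟨k, hk⟩ := h2
      have hdvd : k ∣ q.val := by
        have : 2 * k ∣ 2 * q.val := hk ▸ this
        exact (mul_dvd_mul_iff_left (two_ne_zero)).mp this
      obtain ⟨t, ht⟩ := hdvd
      have hqlt : q.val < m := ZMod.val_lt q
      have hk0 : 0 < k := by omega
      have ht2 : t < 2 := by nlinarith [hqlt, hk, ht, hk0]
      interval_cases t
      · left
        rw [← hqcast, ht]
        simp
      · right
        rw [← hqcast, ht, hc]
        congr 1
        omega
    · rintro (rfl | rfl)
      · rw [mul_zero]
      · exact hc2
  rw [hset, Nat.card_coe_set_eq, Set.ncard_pair (Ne.symm hc0)]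
  norm_num

theorem sol_iff_even (h2 : 2 ∣ m) (x : ZMod m) :
    (∃ q : ZMod m, 2 * q = x) ↔ (ZMod.castHom h2 (ZMod 2)) x = 0 := by
  constructor
  · rintro ⟨q, rfl⟩
    rw [map_mul]
    have : (ZMod.castHom h2 (ZMod 2)) 2 = 0 := by
      have : (2 : ZMod m) = ((2:ℕ) : ZMod m) := by norm_cast
      rw [this, map_natCast]
      decide
    rw [this, zero_mul]
  · intro hx
    have hval : ((x.val : ℕ) : ZMod 2) = 0 := by
      rw [← hx, ZMod.castHom_apply, ← ZMod.natCast_val]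
    rw [ZMod.natCast_eq_zero_iff] at hval
    obtain ⟨k, hk⟩ := hval
    refine ⟨((k : ℕ) : ZMod m), ?_⟩
    have hqcast : ((x.val : ℕ) : ZMod m) = x := ZMod.natCast_rightInverse x
    rw [← hqcast, hk]
    push_cast
    ring

theorem sol_sub_of_unsol (h2 : 2 ∣ m) {x y : ZMod m}
    (hx : ¬∃ q : ZMod m, 2 * q = x) (hy : ¬∃ q : ZMod m, 2 * q = y) :
    ∃ q : ZMod m, 2 * q = x - y := by
  rw [sol_iff_even h2] at hx hy ⊢
  have ex : ∀ a : ZMod 2, a ≠ 0 → a = 1 := by decide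
  rw [map_sub, ex _ hx, ex _ hy, sub_self]

end n2

section marks

theorem smul_mk {H : Subgroup (DihedralGroup m)} (g x : DihedralGroup m) :
    g • ((x : DihedralGroup m) : DihedralGroup m ⧸ H) = ((g * x : DihedralGroup m) : DihedralGroup m ⧸ H) := rfl

theorem smul_mk' {H K : Subgroup (DihedralGroup m)} (k : K) (x : DihedralGroup m) :
    k • ((x : DihedralGroup m) : DihedralGroup m ⧸ H) = (((k : DihedralGroup m) * x : DihedralGroup m) : DihedralGroup m ⧸ H) := rfl

theorem mk_r_inj {t q q' : ZMod m} :
    (((r q : DihedralGroup m)) : DihedralGroup m ⧸ Ht t) = ((r q' : DihedralGroup m) : DihedralGroup m ⧸ Ht t) ↔ q = q' := by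
  have hinv : (r q : DihedralGroup m)⁻¹ * r q' = r (q' - q) := by
    show (r (-q) : DihedralGroup m) * r q' = _
    rw [r_mul_r]
    congr 1
    ring
  rw [QuotientGroup.eq, hinv]
  constructor
  · intro h
    rw [mem_Ht] at h
    rcases h with h | h
    · rw [one_def] at h
      have := r.inj h
      have := sub_eq_zero.mp this
      exact this.symm
    · simp only [reduceCtorEq] at h
  · rintro rfl
    rw [sub_self, ← one_def]
    exact Subgroup.one_mem _

theorem mk_sr {t a : ZMod m} :
    (((sr a : DihedralGroup m)) : DihedralGroup m ⧸ Ht t) = ((r (t - a) : DihedralGroup m) : DihedralGroup m ⧸ Ht t) := by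
  rw [QuotientGroup.eq]
  have : (sr a : DihedralGroup m)⁻¹ * r (t - a) = sr (t - a + a) := by
    show (sr a : DihedralGroup m) * r (t - a) = _
    rw [sr_mul_r]
    congr 1
    ring
  rw [this, mem_Ht]
  right
  congr 1
  ring

theorem exists_rep {t : ZMod m} (x : DihedralGroup m ⧸ Ht t) :
    ∃ q : ZMod m, x = ((r q : DihedralGroup m) : DihedralGroup m ⧸ Ht t) := by
  induction x using QuotientGroup.induction_on with
  | _ z =>
    rcases z with q | a
    · exact ⟨q, rfl⟩
    · exact ⟨t - a, mk_sr⟩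

theorem mark_top_eq : mark (DihedralGroup m) ⊤ = 1 := by
  funext K
  show (Nat.card (fixedPoints K (DihedralGroup m ⧸ (⊤ : Subgroup (DihedralGroup m)))) : ℤ) = 1
  haveI : Subsingleton (DihedralGroup m ⧸ (⊤ : Subgroup (DihedralGroup m))) :=
    QuotientGroup.subsingleton_quotient_top
  haveI : Unique (DihedralGroup m ⧸ (⊤ : Subgroup (DihedralGroup m))) :=
    uniqueOfSubsingleton (1 : DihedralGroup m ⧸ (⊤ : Subgroup (DihedralGroup m)))
  have : fixedPoints K (DihedralGroup m ⧸ (⊤ : Subgroup (DihedralGroup m))) = Set.univ := by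
    ext x
    simp only [Set.mem_univ, iff_true, mem_fixedPoints]
    intro k
    exact Subsingleton.elim _ _
  rw [this]
  simp

theorem fixedPoints_bot_eq_univ (X : Type*) [MulAction (DihedralGroup m) X] :
    fixedPoints ((⊥ : Subgroup (DihedralGroup m))) X = Set.univ := by
  ext x
  simp only [Set.mem_univ, iff_true, mem_fixedPoints]
  rintro ⟨k, hk⟩
  rw [Subgroup.mem_bot] at hk
  subst hk
  show (1 : DihedralGroup m) • x = x
  exact one_smul _ _

variable [NeZero m]

theorem card_G : Nat.card (DihedralGroup m) = 2 * m := by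
  rw [Nat.card_eq_fintype_card, DihedralGroup.card]

theorem mark_bot_bot : mark (DihedralGroup m) ⊥ ⊥ = 2 * m := by
  show (Nat.card (fixedPoints (⊥ : Subgroup (DihedralGroup m)) (DihedralGroup m ⧸ (⊥ : Subgroup (DihedralGroup m)))) : ℤ) = 2 * m
  erw [fixedPoints_bot_eq_univ]
  rw [Nat.card_coe_set_eq, Set.ncard_univ, Nat.card_congr QuotientGroup.quotientBot.toEquiv, card_G]
  push_cast
  ring

theorem mark_bot_ne {K : Subgroup (DihedralGroup m)} (h : K ≠ ⊥) :
    mark (DihedralGroup m) ⊥ K = 0 := by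
  show (Nat.card (fixedPoints K (DihedralGroup m ⧸ (⊥ : Subgroup (DihedralGroup m)))) : ℤ) = 0
  obtain ⟨k, hkK, hk1⟩ := (K.bot_or_exists_ne_one).resolve_left h
  have : fixedPoints K (DihedralGroup m ⧸ (⊥ : Subgroup (DihedralGroup m))) = ∅ := by
    ext x
    simp only [Set.mem_empty_iff_false, iff_false, mem_fixedPoints]
    intro hfix
    induction x using QuotientGroup.induction_on with
    | _ z =>
      have := hfix ⟨k, hkK⟩
      rw [smul_mk', QuotientGroup.eq] at this
      rw [Subgroup.mem_bot] at this
      apply hk1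
      have : z⁻¹ * (k⁻¹ * z) = 1 := by
        rw [← mul_assoc, ← mul_inv_rev]
        exact this
      have h2 : k⁻¹ = z * z⁻¹ * k⁻¹ := by rw [mul_inv_cancel, one_mul]
      calc k = (k⁻¹)⁻¹ := (inv_inv k).symm
        _ = 1 := by
          rw [show k⁻¹ = z * (z⁻¹ * (k⁻¹ * z)) * z⁻¹ by group, this]
          group
  rw [this]
  simp

theorem index_Ht {t : ZMod m} : Nat.card (DihedralGroup m ⧸ Ht t) = m := by
  have h1 : Nat.card (Ht t : Subgroup (DihedralGroup m)) = 2 := by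
    rw [Ht, Nat.card_zpowers, orderOf_sr]
  have h2 := Subgroup.card_mul_index (Ht t : Subgroup (DihedralGroup m))
  rw [h1, card_G] at h2
  have h3 : (Ht t : Subgroup (DihedralGroup m)).index = Nat.card (DihedralGroup m ⧸ Ht t) := rfl
  omega

theorem mark_Ht_bot {t : ZMod m} : mark (DihedralGroup m) (Ht t) ⊥ = m := by
  show (Nat.card (fixedPoints (⊥ : Subgroup (DihedralGroup m)) (DihedralGroup m ⧸ Ht t)) : ℤ) = m
  erw [fixedPoints_bot_eq_univ]
  rw [Nat.card_coe_set_eq, Set.ncard_univ, index_Ht]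

theorem mark_Ht_rot {t p : ZMod m} {K : Subgroup (DihedralGroup m)} (hp : p ≠ 0) (hK : r p ∈ K) :
    mark (DihedralGroup m) (Ht t) K = 0 := by
  show (Nat.card (fixedPoints K (DihedralGroup m ⧸ Ht t)) : ℤ) = 0
  have : fixedPoints K (DihedralGroup m ⧸ Ht t) = ∅ := by
    ext x
    simp only [Set.mem_empty_iff_false, iff_false, mem_fixedPoints]
    intro hfix
    obtain ⟨q, rfl⟩ := exists_rep x
    have := hfix ⟨r p, hK⟩
    rw [smul_mk', r_mul_r, mk_r_inj] at this
    apply hp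
    linear_combination this
  rw [this]
  simp

theorem mark_Ht_Ht {t p : ZMod m} :
    mark (DihedralGroup m) (Ht t) (Ht p) = n2 m (t - p) := by
  show (Nat.card (fixedPoints (Ht p) (DihedralGroup m ⧸ Ht t)) : ℤ) = n2 m (t - p)
  have hset : fixedPoints (Ht p) (DihedralGroup m ⧸ Ht t) =
      (fun q : ZMod m => ((r q : DihedralGroup m) : DihedralGroup m ⧸ Ht t)) '' {q : ZMod m | 2 * q = t - p} := by
    ext x
    simp only [mem_fixedPoints, Set.mem_image, Set.mem_setOf_eq]
    constructor
    · intro hfix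
      obtain ⟨q, rfl⟩ := exists_rep x
      refine ⟨q, ?_, rfl⟩
      have := hfix ⟨sr p, Subgroup.mem_zpowers _⟩
      rw [smul_mk', sr_mul_r, mk_sr, mk_r_inj] at this
      linear_combination -this
    · rintro ⟨q, hq, rfl⟩
      intro k
      have hsm := smul_mk' (H := Ht t) k (r q)
      rcases mem_Ht.mp k.2 with h1 | h1
      · rw [hsm, h1, one_mul]
      · rw [hsm, h1, sr_mul_r, mk_sr, mk_r_inj]
        linear_combination -hq
  rw [hset]
  have hinj : Function.Injective (fun q : ZMod m => ((r q : DihedralGroup m) : DihedralGroup m ⧸ Ht t)) := by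
    intro q q' h
    exact mk_r_inj.mp h
  rw [Nat.card_coe_set_eq, Set.ncard_image_of_injective _ hinj, n2, Nat.card_coe_set_eq]

end marks

section conj

theorem map_zpowers' {G N : Type*} [Group G] [Group N] (f : G →* N) (x : G) :
    (Subgroup.zpowers x).map f = Subgroup.zpowers (f x) := by
  rw [Subgroup.zpowers_eq_closure, Subgroup.zpowers_eq_closure, MonoidHom.map_closure,
    Set.image_singleton]

theorem conjSub_bot (g : DihedralGroup m) : conjSub g (⊥ : Subgroup (DihedralGroup m)) = ⊥ :=
  Subgroup.map_bot _

theorem conjSub_top (g : DihedralGroup m) : conjSub g (⊤ : Subgroup (DihedralGroup m)) = ⊤ :=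
  Subgroup.map_top_of_surjective _ (MulAut.conj g).surjective

theorem conjSub_Ht (g : DihedralGroup m) (t : ZMod m) :
    ∃ t' e : ZMod m, 2 * e = t - t' ∧ conjSub g (Ht t) = Ht t' := by
  have hmap : conjSub g (Ht t) = Subgroup.zpowers (g * sr t * g⁻¹) := by
    rw [conjSub, Ht, map_zpowers']
    congr 1
  rcases g with a | a
  · refine ⟨t - 2 * a, a, by ring, ?_⟩
    rw [hmap, Ht]
    congr 1
    show (r a : DihedralGroup m) * sr t * r (-a) = _
    rw [r_mul_sr, sr_mul_r]
    congr 1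
    ring
  · refine ⟨2 * a - t, t - a, by ring, ?_⟩
    rw [hmap, Ht]
    congr 1
    show (sr a : DihedralGroup m) * sr t * sr a = _
    rw [sr_mul_sr, r_mul_sr]
    congr 1
    ring

theorem mark_Ht_congr [NeZero m] {t t' : ZMod m} (h : ∃ e : ZMod m, 2 * e = t - t') :
    mark (DihedralGroup m) (Ht t) = mark (DihedralGroup m) (Ht t') := by
  obtain ⟨e, he⟩ := h
  funext K
  rcases subgroup_cases K with rfl | ⟨p, hp, hpK⟩ | ⟨p, rfl⟩
  · rw [mark_Ht_bot, mark_Ht_bot]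
  · rw [mark_Ht_rot hp hpK, mark_Ht_rot hp hpK]
  · rw [mark_Ht_Ht, mark_Ht_Ht]
    exact n2_shift (by rw [he]; ring)

end conj

section gens

theorem two_ne_zero_zmod (hm : 3 ≤ m) : (2 : ZMod m) ≠ 0 := by
  have : (2 : ZMod m) = ((2 : ℕ) : ZMod m) := by norm_cast
  rw [this, Ne, ZMod.natCast_eq_zero_iff]
  intro h
  have := Nat.le_of_dvd (by norm_num) h
  omega

theorem r_one_zpow (k : ℤ) : ∃ x : ZMod m, (r 1 : DihedralGroup m) ^ k = r x := by
  rcases k with n | n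
  · refine ⟨(n : ZMod m), ?_⟩
    show (r 1 : DihedralGroup m) ^ ((n : ℕ) : ℤ) = r (n : ZMod m)
    rw [zpow_natCast, r_one_pow]
  · refine ⟨-((n+1 : ℕ) : ZMod m), ?_⟩
    rw [zpow_negSucc, r_one_pow]
    rfl

theorem simples_refl (hm : 3 ≤ m) {s₀ s₁ : DihedralGroup m}
    (hgen : Subgroup.closure {s₀, s₁} = ⊤) (h₀ : s₀ * s₀ = 1) (h₁ : s₁ * s₁ = 1) :
    ∃ i j : ZMod m, s₀ = sr i ∧ s₁ = sr j := by
  haveI : NeZero m := ⟨by omega⟩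
  have h2 := two_ne_zero_zmod hm
  -- helper : a central rotation together with a reflection cannot generate
  have key : ∀ c jj : ZMod m, c + c = 0 → Subgroup.closure {r c, sr jj} = ⊤ → False := by
    intro c jj hc hg
    have hcen : ({r c, sr jj} : Set (DihedralGroup m)) ⊆ ↑(Subgroup.centralizer {sr jj}) := by
      rintro x (rfl | rfl)
      · rw [SetLike.mem_coe, Subgroup.mem_centralizer_iff]
        rintro h ⟨rfl⟩
        rw [sr_mul_r, r_mul_sr]
        congr 1
        linear_combination hc
      · rw [SetLike.mem_coe, Subgroup.mem_centralizer_iff]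
        rintro h ⟨rfl⟩
        rfl
    have htop : (⊤ : Subgroup (DihedralGroup m)) ≤ Subgroup.centralizer {sr jj} := by
      rw [← hg]
      exact Subgroup.closure_le _ |>.mpr hcen
    have hr1 := htop (Subgroup.mem_top (r 1))
    rw [Subgroup.mem_centralizer_iff] at hr1
    have := hr1 (sr jj) rfl
    rw [sr_mul_r, r_mul_sr] at this
    have := sr.inj this
    apply h2
    linear_combination this
  have hswap : Subgroup.closure {s₁, s₀} = ⊤ := by
    rw [Set.pair_comm]; exact hgen
  rcases hs0 : s₀ with c₀ | i <;> rcases hs1 : s₁ with c₁ | j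
  · -- both rotations: contained in zpowers (r 1)
    exfalso
    have hsub : ({r c₀, r c₁} : Set (DihedralGroup m)) ⊆ ↑(Subgroup.zpowers (r 1 : DihedralGroup m)) := by
      rintro x (rfl | rfl)
      · rw [SetLike.mem_coe]
        refine ⟨((c₀.val : ℕ) : ℤ), ?_⟩
        show (r 1 : DihedralGroup m) ^ ((c₀.val : ℕ) : ℤ) = r c₀
        rw [zpow_natCast, r_one_pow]
        congr 1
        exact ZMod.natCast_rightInverse c₀
      · rw [SetLike.mem_coe]
        refine ⟨((c₁.val : ℕ) : ℤ), ?_⟩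
        show (r 1 : DihedralGroup m) ^ ((c₁.val : ℕ) : ℤ) = r c₁
        rw [zpow_natCast, r_one_pow]
        congr 1
        exact ZMod.natCast_rightInverse c₁
    have htop : (⊤ : Subgroup (DihedralGroup m)) ≤ Subgroup.zpowers (r 1 : DihedralGroup m) := by
      rw [← (hs0 ▸ hs1 ▸ hgen : Subgroup.closure {r c₀, r c₁} = ⊤)]
      exact Subgroup.closure_le _ |>.mpr hsub
    obtain ⟨k, hk⟩ := htop (Subgroup.mem_top (sr 0))
    obtain ⟨x, hx⟩ := r_one_zpow (m := m) k
    have hk' : (r 1 : DihedralGroup m) ^ k = sr 0 := hk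
    rw [hx] at hk'
    simp only [reduceCtorEq] at hk'
  · -- s₀ rotation, s₁ reflection
    exfalso
    rw [hs0] at h₀
    rw [r_mul_r, one_def] at h₀
    exact key c₀ j (r.inj h₀) (hs0 ▸ hs1 ▸ hgen)
  · -- s₀ reflection, s₁ rotation
    exfalso
    rw [hs1] at h₁
    rw [r_mul_r, one_def] at h₁
    exact key c₁ i (r.inj h₁) (hs1 ▸ hs0 ▸ hswap)
  · exact ⟨i, j, rfl, rfl⟩

theorem d_unsol (h2 : 2 ∣ m) {i j : ZMod m}
    (hgen : Subgroup.closure {(sr i : DihedralGroup m), sr j} = ⊤) :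
    ¬ ∃ e : ZMod m, 2 * e = j - i := by
  rintro ⟨e, he⟩
  set φ := ZMod.castHom h2 (ZMod 2) with hφ
  have hφ2 : φ 2 = 0 := by
    have h22 : (2 : ZMod m) = ((2:ℕ) : ZMod m) := by norm_cast
    rw [h22, map_natCast]
    decide
  let Kb : Subgroup (DihedralGroup m) :=
    { carrier := {g : DihedralGroup m |
        match g with
        | DihedralGroup.r x => φ x = 0
        | DihedralGroup.sr x => φ (x - i) = 0}
      one_mem' := by show φ 0 = 0; exact map_zero φ
      mul_mem' := by
        rintro (x | x) (y | y) hx hy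
        · show φ (x + y) = 0
          have hx' : φ x = 0 := hx
          have hy' : φ y = 0 := hy
          rw [map_add, hx', hy', add_zero]
        · show φ (y - x - i) = 0
          have hx' : φ x = 0 := hx
          have hy' : φ (y - i) = 0 := hy
          have : (y - x - i : ZMod m) = (y - i) - x := by ring
          rw [this, map_sub, hx', hy', sub_zero]
        · show φ (x + y - i) = 0
          have hx' : φ (x - i) = 0 := hx
          have hy' : φ y = 0 := hy
          have : (x + y - i : ZMod m) = (x - i) + y := by ring
          rw [this, map_add, hx', hy', add_zero]
        · show φ (y - x) = 0
          have hx' : φ (x - i) = 0 := hx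
          have hy' : φ (y - i) = 0 := hy
          have : (y - x : ZMod m) = (y - i) - (x - i) := by ring
          rw [this, map_sub, hx', hy', sub_zero]
      inv_mem' := by
        rintro (x | x) hx
        · show φ (-x) = 0
          have hx' : φ x = 0 := hx
          rw [map_neg, hx', neg_zero]
        · exact hx }
  have hsub : ({(sr i : DihedralGroup m), sr j} : Set (DihedralGroup m)) ⊆ ↑Kb := by
    rintro x (rfl | rfl)
    · show φ (i - i) = 0
      rw [sub_self, map_zero]
    · show φ (j - i) = 0
      rw [← he, map_mul, hφ2, zero_mul]
  have htop : (⊤ : Subgroup (DihedralGroup m)) ≤ Kb := by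
    rw [← hgen]
    exact Subgroup.closure_le _ |>.mpr hsub
  have hr1 : φ 1 = 0 := htop (Subgroup.mem_top (r 1))
  rw [map_one] at hr1
  exact one_ne_zero hr1

end gens

section span

variable [NeZero m] (i j : ZMod m)

theorem n2_zero_pos : 1 ≤ n2 m 0 := by
  unfold n2
  have h0 : (0 : ZMod m) ∈ {q : ZMod m | 2 * q = 0} := by simp
  have : Nat.card {q : ZMod m | 2 * q = 0} ≠ 0 := by
    haveI : Finite {q : ZMod m | 2 * q = 0} := Subtype.finite
    rw [Nat.card_ne_zero]
    exact ⟨⟨⟨0, h0⟩⟩, inferInstance⟩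
  omega

theorem n2_zero_cases (hm : 3 ≤ m) : n2 m 0 = 1 ∨ n2 m 0 = 2 := by
  by_cases h2 : 2 ∣ m
  · exact Or.inr (n2_zero_even h2 hm)
  · exact Or.inl (n2_zero_odd h2)

theorem n2_sq (x : ZMod m) : n2 m x * n2 m x = n2 m 0 * n2 m x := by
  by_cases h : ∃ q : ZMod m, 2 * q = x
  · rw [n2_sol h]
  · rw [n2_unsol h, mul_zero, mul_zero]

theorem nu_eps (hm : 3 ≤ m) (hd : 2 ∣ m → ¬ ∃ e : ZMod m, 2 * e = j - i) : n2 m 0 + n2 m (j - i) = 2 := by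
  by_cases h2 : 2 ∣ m
  · rw [n2_zero_even h2 hm, n2_unsol (hd h2), add_zero]
  · rw [n2_zero_odd h2, n2_sol (sol_all_odd h2 _), n2_zero_odd h2]
    norm_num

theorem n2_pair (hd : 2 ∣ m → ¬ ∃ e : ZMod m, 2 * e = j - i) (x₀ : ZMod m) :
    (n2 m x₀ = n2 m 0 ∧ n2 m (x₀ + (j - i)) = n2 m (j - i)) ∨
    (n2 m x₀ = n2 m (j - i) ∧ n2 m (x₀ + (j - i)) = n2 m 0) := by
  by_cases hsol : ∃ q : ZMod m, 2 * q = x₀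
  · left
    obtain ⟨q, hq⟩ := hsol
    constructor
    · exact n2_sol ⟨q, hq⟩
    · exact n2_shift (e := q) (by rw [hq]; ring)
  · right
    have h2 : 2 ∣ m := by
      by_contra h2
      exact hsol (sol_all_odd h2 _)
    constructor
    · rw [n2_unsol hsol, n2_unsol (hd h2)]
    · have hsub := sol_sub_of_unsol h2 hsol (hd h2)
      obtain ⟨q, hq⟩ := hsub
      refine n2_shift (e := q + (j - i)) ?_
      rw [mul_add, hq]
      ring

theorem n2_pair' (hd : 2 ∣ m → ¬ ∃ e : ZMod m, 2 * e = j - i) (p : ZMod m) :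
    (n2 m (i - p) = n2 m 0 ∧ n2 m (j - p) = n2 m (j - i)) ∨
    (n2 m (i - p) = n2 m (j - i) ∧ n2 m (j - p) = n2 m 0) := by
  have := n2_pair i j hd (i - p)
  have hrw : i - p + (j - i) = j - p := by ring
  rw [hrw] at this
  exact this

-- product relations for the mark functions
theorem prodAA (K : Subgroup (DihedralGroup m)) :
    mark (DihedralGroup m) ⊥ K * mark (DihedralGroup m) ⊥ K
      = 2 * m * mark (DihedralGroup m) ⊥ K := by
  by_cases h : K = ⊥
  · subst h; rw [mark_bot_bot]
  · rw [mark_bot_ne h, mul_zero, mul_zero]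

theorem prodAB (t : ZMod m) (K : Subgroup (DihedralGroup m)) :
    mark (DihedralGroup m) ⊥ K * mark (DihedralGroup m) (Ht t) K
      = m * mark (DihedralGroup m) ⊥ K := by
  by_cases h : K = ⊥
  · subst h; rw [mark_bot_bot, mark_Ht_bot]; ring
  · rw [mark_bot_ne h, zero_mul, mul_zero]

theorem prodBB (hm : 3 ≤ m) (t : ZMod m) : ∃ μ : ℤ, ∀ K : Subgroup (DihedralGroup m),
    mark (DihedralGroup m) (Ht t) K * mark (DihedralGroup m) (Ht t) K
      = n2 m 0 * mark (DihedralGroup m) (Ht t) K + μ * mark (DihedralGroup m) ⊥ K := by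
  have hpar : ∃ k : ℤ, (m : ℤ) - n2 m 0 = 2 * k := by
    rcases n2_zero_cases hm with h | h
    · rcases Nat.even_or_odd m with ⟨l, hl⟩ | ⟨l, hl⟩
      · exfalso
        have : (2 : ℕ) ∣ m := ⟨l, by omega⟩
        rw [n2_zero_even this hm] at h
        norm_num at h
      · exact ⟨l, by rw [h]; push_cast [hl]; ring⟩
    · rcases Nat.even_or_odd m with ⟨l, hl⟩ | ⟨l, hl⟩
      · exact ⟨l - 1, by rw [h]; push_cast [hl]; ring⟩
      · exfalso
        have h2 : ¬ (2:ℕ) ∣ m := by omega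
        rw [n2_zero_odd h2] at h
        norm_num at h
  obtain ⟨k, hk⟩ := hpar
  refine ⟨k, fun K => ?_⟩
  rcases subgroup_cases K with rfl | ⟨p, hp, hpK⟩ | ⟨p, rfl⟩
  · rw [mark_Ht_bot, mark_bot_bot]
    linear_combination (m : ℤ) * hk
  · rw [mark_Ht_rot hp hpK, mark_bot_ne (by rintro rfl; rw [Subgroup.mem_bot, one_def] at hpK; exact hp (r.inj hpK))]
    ring
  · rw [mark_Ht_Ht, mark_bot_ne Ht_ne_bot, mul_zero, add_zero]
    exact n2_sq _

theorem prodBC (hm : 3 ≤ m) (hd : 2 ∣ m → ¬ ∃ e : ZMod m, 2 * e = j - i) : ∃ ρ σ : ℤ, ∀ K : Subgroup (DihedralGroup m),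
    mark (DihedralGroup m) (Ht i) K * mark (DihedralGroup m) (Ht j) K
      = σ * mark (DihedralGroup m) (Ht i) K + ρ * mark (DihedralGroup m) ⊥ K := by
  by_cases h2 : 2 ∣ m
  · obtain ⟨l, hl⟩ := h2
    refine ⟨l, 0, fun K => ?_⟩
    rcases subgroup_cases K with rfl | ⟨p, hp, hpK⟩ | ⟨p, rfl⟩
    · rw [mark_Ht_bot, mark_Ht_bot, mark_bot_bot]
      push_cast [hl]
      ring
    · rw [mark_Ht_rot hp hpK, mark_bot_ne (by rintro rfl; rw [Subgroup.mem_bot, one_def] at hpK; exact hp (r.inj hpK))]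
      ring
    · rw [mark_Ht_Ht, mark_Ht_Ht, mark_bot_ne Ht_ne_bot]
      have : n2 m (i - p) * n2 m (j - p) = 0 := by
        rcases n2_pair' i j hd p with ⟨h1, h3⟩ | ⟨h1, h3⟩
        · rw [h3, n2_unsol (hd ⟨l, hl⟩), mul_zero]
        · rw [h1, n2_unsol (hd ⟨l, hl⟩), zero_mul]
      rw [this]
      ring
  · have hBC : mark (DihedralGroup m) (Ht j) = mark (DihedralGroup m) (Ht i) :=
      mark_Ht_congr (sol_all_odd h2 _)
    obtain ⟨μ, hμ⟩ := prodBB hm i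
    exact ⟨μ, n2 m 0, fun K => by rw [hBC]; exact hμ K⟩

end span

section inspan

variable [NeZero m]

/-- Membership in the `ℤ`-span of `1, mark ⊥, mark (Ht i), mark (Ht j)`. -/
def InSpan (i j : ZMod m) (f : Subgroup (DihedralGroup m) → ℤ) : Prop :=
  ∃ x y z w : ℤ, ∀ K : Subgroup (DihedralGroup m),
    f K = x + y * mark (DihedralGroup m) ⊥ K + z * mark (DihedralGroup m) (Ht i) K
        + w * mark (DihedralGroup m) (Ht j) K

theorem InSpan_zero (i j : ZMod m) : InSpan i j 0 :=
  ⟨0, 0, 0, 0, fun K => by simp⟩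

theorem InSpan_one (i j : ZMod m) : InSpan i j 1 :=
  ⟨1, 0, 0, 0, fun K => by simp⟩

theorem InSpan_add {i j : ZMod m} {f g : Subgroup (DihedralGroup m) → ℤ}
    (hf : InSpan i j f) (hg : InSpan i j g) : InSpan i j (f + g) := by
  obtain ⟨x, y, z, w, hf⟩ := hf
  obtain ⟨x', y', z', w', hg⟩ := hg
  exact ⟨x + x', y + y', z + z', w + w', fun K => by
    rw [Pi.add_apply, hf K, hg K]; ring⟩

theorem InSpan_neg {i j : ZMod m} {f : Subgroup (DihedralGroup m) → ℤ}
    (hf : InSpan i j f) : InSpan i j (-f) := by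
  obtain ⟨x, y, z, w, hf⟩ := hf
  exact ⟨-x, -y, -z, -w, fun K => by rw [Pi.neg_apply, hf K]; ring⟩

theorem InSpan_mul (hm : 3 ≤ m) {i j : ZMod m}
    (hd : 2 ∣ m → ¬ ∃ e : ZMod m, 2 * e = j - i)
    {f g : Subgroup (DihedralGroup m) → ℤ}
    (hf : InSpan i j f) (hg : InSpan i j g) : InSpan i j (f * g) := by
  obtain ⟨x, y, z, w, hf⟩ := hf
  obtain ⟨x', y', z', w', hg⟩ := hg
  obtain ⟨μi, hμi⟩ := prodBB (m := m) hm i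
  obtain ⟨μj, hμj⟩ := prodBB (m := m) hm j
  obtain ⟨ρ, σ, hρσ⟩ := prodBC (m := m) i j hm hd
  refine ⟨x*x',
    x*y' + x'*y + 2*m*(y*y') + m*(y*z' + z*y') + m*(y*w' + w*y') + μi*(z*z') + μj*(w*w')
      + ρ*(z*w' + w*z'),
    x*z' + x'*z + n2 m 0 * (z*z') + σ*(z*w' + w*z'),
    x*w' + x'*w + n2 m 0 * (w*w'), fun K => ?_⟩
  rw [Pi.mul_apply, hf K, hg K]
  linear_combination (y*y') * prodAA K + (y*z' + z*y') * prodAB i K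
    + (y*w' + w*y') * prodAB j K + (z*z') * hμi K + (w*w') * hμj K
    + (z*w' + w*z') * hρσ K

end inspan

section helpers2

theorem conjSub_one {G : Type*} [Group G] (H : Subgroup G) : conjSub (1 : G) H = H := by
  ext x
  simp only [conjSub, Subgroup.mem_map, MulEquiv.coe_toMonoidHom, MulAut.conj_apply, one_mul,
    inv_one, mul_one]
  exact exists_eq_right

theorem range_fin2 {α : Type*} (f : Fin 2 → α) : Set.range f = {f 0, f 1} := by
  ext x
  simp only [Set.mem_range, Set.mem_insert_iff, Set.mem_singleton_iff]
  constructor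
  · rintro ⟨k, rfl⟩
    fin_cases k
    · exact Or.inl rfl
    · exact Or.inr rfl
  · rintro (rfl | rfl)
    · exact ⟨0, rfl⟩
    · exact ⟨1, rfl⟩

theorem small_mul' (hm : 3 ≤ m) {t c : ℤ} (h : (m : ℤ) * t = c) (hc1 : -2 ≤ c) (hc2 : c ≤ 2) :
    t = 0 := by
  have hm' : (3 : ℤ) ≤ (m : ℤ) := by exact_mod_cast hm
  rcases lt_trichotomy t 0 with ht | ht | ht
  · nlinarith
  · exact ht
  · nlinarith

variable [NeZero m]

theorem one_ne_zero_zmod (hm : 3 ≤ m) : (1 : ZMod m) ≠ 0 := by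
  have : (1 : ZMod m) = ((1 : ℕ) : ZMod m) := by norm_cast
  rw [this, Ne, ZMod.natCast_eq_zero_iff]
  intro h
  have := Nat.le_of_dvd (by norm_num) h
  omega

theorem top_ne_bot : (⊤ : Subgroup (DihedralGroup m)) ≠ ⊥ := by
  intro h
  have : (sr 0 : DihedralGroup m) ∈ (⊤ : Subgroup (DihedralGroup m)) := Subgroup.mem_top _
  rw [h, Subgroup.mem_bot] at this
  exact sr_ne_one this

theorem n2_symm (i j : ZMod m) : n2 m (i - j) = n2 m (j - i) :=
  n2_shift (e := i - j) (by ring)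

theorem refl_sum (hm : 3 ≤ m) {i j : ZMod m}
    (hd : 2 ∣ m → ¬ ∃ e : ZMod m, 2 * e = j - i) (p : ZMod m) :
    n2 m (i - p) + n2 m (j - p) = 2 := by
  rcases n2_pair' i j hd p with ⟨h1, h2⟩ | ⟨h1, h2⟩
  · rw [h1, h2]
    exact nu_eps i j hm hd
  · rw [h1, h2, add_comm]
    exact nu_eps i j hm hd

-- evaluations at the test subgroups
theorem evalT_A (hm : 3 ≤ m) : mark (DihedralGroup m) ⊥ (⊤ : Subgroup (DihedralGroup m)) = 0 :=
  mark_bot_ne top_ne_bot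

theorem evalT_Ht (hm : 3 ≤ m) (t : ZMod m) :
    mark (DihedralGroup m) (Ht t) (⊤ : Subgroup (DihedralGroup m)) = 0 :=
  mark_Ht_rot (one_ne_zero_zmod hm) (Subgroup.mem_top _)

theorem eval_Ht_self (t : ZMod m) :
    mark (DihedralGroup m) (Ht t) (Ht t) = n2 m 0 := by
  rw [mark_Ht_Ht, sub_self]

end helpers2

section units

variable [NeZero m]

/-- The nontrivial unit of the partial Burnside ring, as a function. -/
noncomputable def uF (i j : ZMod m) : Subgroup (DihedralGroup m) → ℤ :=
  fun K => 1 + mark (DihedralGroup m) ⊥ K - mark (DihedralGroup m) (Ht i) K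
    - mark (DihedralGroup m) (Ht j) K

theorem uF_eq_ring (i j : ZMod m) :
    uF i j = (1 : Subgroup (DihedralGroup m) → ℤ) + mark (DihedralGroup m) ⊥
      - mark (DihedralGroup m) (Ht i) - mark (DihedralGroup m) (Ht j) := by
  funext K
  simp [uF]

theorem uF_val_bot (i j : ZMod m) : uF i j ⊥ = 1 := by
  unfold uF
  rw [mark_bot_bot, mark_Ht_bot, mark_Ht_bot]
  ring

theorem uF_val_rot (i j : ZMod m) {p : ZMod m} {K : Subgroup (DihedralGroup m)}
    (hp : p ≠ 0) (hpK : r p ∈ K) : uF i j K = 1 := by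
  unfold uF
  rw [mark_bot_ne (by rintro rfl; rw [Subgroup.mem_bot, one_def] at hpK; exact hp (r.inj hpK)),
    mark_Ht_rot hp hpK, mark_Ht_rot hp hpK]
  ring

theorem uF_val_refl (hm : 3 ≤ m) {i j : ZMod m}
    (hd : 2 ∣ m → ¬ ∃ e : ZMod m, 2 * e = j - i) (p : ZMod m) :
    uF i j (Ht p) = -1 := by
  unfold uF
  rw [mark_bot_ne Ht_ne_bot, mark_Ht_Ht, mark_Ht_Ht]
  linear_combination -(refl_sum hm hd p)

theorem uF_sq (hm : 3 ≤ m) {i j : ZMod m}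
    (hd : 2 ∣ m → ¬ ∃ e : ZMod m, 2 * e = j - i) :
    uF i j * uF i j = 1 := by
  funext K
  rw [Pi.mul_apply, Pi.one_apply]
  rcases subgroup_cases K with rfl | ⟨p, hp, hpK⟩ | ⟨p, rfl⟩
  · rw [uF_val_bot]; ring
  · rw [uF_val_rot i j hp hpK]; ring
  · rw [uF_val_refl hm hd]; ring

theorem units_classify (hm : 3 ≤ m) {i j : ZMod m}
    (hd : 2 ∣ m → ¬ ∃ e : ZMod m, 2 * e = j - i) (f : Subgroup (DihedralGroup m) → ℤ)
    (hspan : InSpan i j f) (hpm : ∀ K : Subgroup (DihedralGroup m), f K = 1 ∨ f K = -1) :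
    f = 1 ∨ f = -1 ∨ f = uF i j ∨ f = -uF i j := by
  obtain ⟨x, y, z, w, hf⟩ := hspan
  have hνε : n2 m 0 + n2 m (j - i) = 2 := nu_eps i j hm hd
  have hT : f ⊤ = x := by
    rw [hf ⊤, evalT_A hm, evalT_Ht hm, evalT_Ht hm]; ring
  have hI : f (Ht i) = x + z * n2 m 0 + w * n2 m (j - i) := by
    rw [hf _, eval_Ht_self, mark_Ht_Ht, mark_bot_ne Ht_ne_bot]; ring
  have hJ : f (Ht j) = x + z * n2 m (j - i) + w * n2 m 0 := by
    rw [hf _, eval_Ht_self, mark_Ht_Ht (t := i) (p := j), n2_symm, mark_bot_ne Ht_ne_bot]; ring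
  have hB : f ⊥ = x + y * (2*(m:ℤ)) + z * m + w * m := by
    rw [hf _, mark_bot_bot, mark_Ht_bot, mark_Ht_bot]
  have hx := hpm ⊤; rw [hT] at hx
  have hi' := hpm (Ht i); rw [hI] at hi'
  have hj' := hpm (Ht j); rw [hJ] at hj'
  have hb := hpm ⊥; rw [hB] at hb
  -- the coefficient of `A` direction
  have hM : 2*y + z + w = 0 := by
    rcases hb with hb | hb
    · refine small_mul' hm (c := 1 - x) (by linear_combination hb) (by omega) (by omega)
    · refine small_mul' hm (c := -1 - x) (by linear_combination hb) (by omega) (by omega)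
  have ha : z * n2 m 0 + w * n2 m (j - i) = 0 ∨ z * n2 m 0 + w * n2 m (j - i) = -2*x := by
    rcases hx with hx | hx <;> rcases hi' with h | h <;> omega
  have hbb : z * n2 m (j - i) + w * n2 m 0 = 0 ∨ z * n2 m (j - i) + w * n2 m 0 = -2*x := by
    rcases hx with hx | hx <;> rcases hj' with h | h <;> omega
  have hsum : (z * n2 m 0 + w * n2 m (j - i)) + (z * n2 m (j - i) + w * n2 m 0)
      = 2 * (z + w) := by linear_combination (z + w) * hνε
  -- key dichotomy
  have key : (y = 0 ∧ z * n2 m 0 + w * n2 m (j - i) = 0 ∧ z * n2 m (j - i) + w * n2 m 0 = 0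
        ∧ z + w = 0)
      ∨ (y = x ∧ z * n2 m 0 + w * n2 m (j - i) = -2*x ∧ z * n2 m (j - i) + w * n2 m 0 = -2*x
        ∧ z + w = -2*x) := by
    rcases hx with hx | hx <;> rcases ha with ha | ha <;> rcases hbb with hbb | hbb <;> omega
  rcases key with ⟨hy, hA1, hA2, hZW⟩ | ⟨hy, hA1, hA2, hZW⟩
  · -- constant case
    have hval : ∀ K : Subgroup (DihedralGroup m), f K = x := by
      intro K
      rcases subgroup_cases K with rfl | ⟨p, hp, hpK⟩ | ⟨p, rfl⟩
      · rw [hB]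
        linear_combination (m:ℤ) * hZW + (2*(m:ℤ)) * hy
      · have hKb : K ≠ ⊥ := by
          rintro rfl
          rw [Subgroup.mem_bot, one_def] at hpK
          exact hp (r.inj hpK)
        rw [hf K, mark_bot_ne hKb, mark_Ht_rot hp hpK, mark_Ht_rot hp hpK]
        ring
      · rw [hf _, mark_bot_ne Ht_ne_bot, mark_Ht_Ht, mark_Ht_Ht]
        rcases n2_pair' i j hd p with ⟨h1, h2⟩ | ⟨h1, h2⟩
        · rw [h1, h2]; linear_combination hA1
        · rw [h1, h2]; linear_combination hA2
    rcases hx with hx | hx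
    · left; funext K; rw [hval K, hx, Pi.one_apply]
    · right; left; funext K; rw [hval K, hx]; rfl
  · -- the `uF` case
    have hval : ∀ K : Subgroup (DihedralGroup m), f K = x * uF i j K := by
      intro K
      rcases subgroup_cases K with rfl | ⟨p, hp, hpK⟩ | ⟨p, rfl⟩
      · rw [hB, uF_val_bot]
        linear_combination (m:ℤ) * hZW + (2*(m:ℤ)) * hy
      · have hKb : K ≠ ⊥ := by
          rintro rfl
          rw [Subgroup.mem_bot, one_def] at hpK
          exact hp (r.inj hpK)
        rw [hf K, uF_val_rot i j hp hpK, mark_bot_ne hKb, mark_Ht_rot hp hpK,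
          mark_Ht_rot hp hpK]
        ring
      · rw [hf _, uF_val_refl hm hd, mark_bot_ne Ht_ne_bot, mark_Ht_Ht, mark_Ht_Ht]
        rcases n2_pair' i j hd p with ⟨h1, h2⟩ | ⟨h1, h2⟩
        · rw [h1, h2]; linear_combination hA1
        · rw [h1, h2]; linear_combination hA2
    rcases hx with hx | hx
    · right; right; left; funext K; rw [hval K, hx, one_mul]
    · right; right; right; funext K; rw [hval K, hx, Pi.neg_apply]; ring

end units

end DPBR

open DPBR DihedralGroup

/-- Let `W` be the dihedral group of order `2m`, `m ≥ 3`, viewed as the Coxeter group of type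
`I₂(m)` (the Coxeter matrix `CoxeterMatrix.I₂ₘ (m - 2)` is the Coxeter matrix of the symmetry
group of the regular `m`-gon).  Then the unit group of the partial Burnside ring relative to
the collection of all parabolic subgroups has order `4`. -/
theorem card_units_pbr_dihedral (m : ℕ) (hm : 3 ≤ m)
    (cs : CoxeterSystem (CoxeterMatrix.I (m - 2)) (DihedralGroup m)) :
    Nat.card ((pbr (DihedralGroup m) (parabolics cs))ˣ) = 4 := by
  haveI : NeZero m := ⟨by omega⟩
  -- the simple reflections
  have hrange : Set.range cs.simple = {cs.simple 0, cs.simple 1} := range_fin2 _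
  have hgen0 : Subgroup.closure {cs.simple 0, cs.simple 1} = ⊤ := by
    rw [← hrange]; exact cs.subgroup_closure_range_simple
  obtain ⟨i, j, hs0, hs1⟩ :=
    simples_refl hm hgen0 (cs.simple_mul_simple_self 0) (cs.simple_mul_simple_self 1)
  have hgen : Subgroup.closure {(sr i : DihedralGroup m), sr j} = ⊤ := by
    rw [← hs0, ← hs1]; exact hgen0
  have hd : 2 ∣ m → ¬ ∃ e : ZMod m, 2 * e = j - i := fun h2 => d_unsol h2 hgen
  set R := pbr (DihedralGroup m) (parabolics cs) with hR
  -- classification of the marks of parabolic subgroups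
  have hGen : ∀ H ∈ parabolics cs,
      mark (DihedralGroup m) H = (1 : Subgroup (DihedralGroup m) → ℤ)
      ∨ mark (DihedralGroup m) H = mark (DihedralGroup m) ⊥
      ∨ mark (DihedralGroup m) H = mark (DihedralGroup m) (Ht i)
      ∨ mark (DihedralGroup m) H = mark (DihedralGroup m) (Ht j) := by
    rintro H ⟨J, g, rfl⟩
    by_cases h0 : (0 : Fin 2) ∈ J <;> by_cases h1 : (1 : Fin 2) ∈ J
    · left
      have hJu : J = Set.univ := by
        ext k
        fin_cases k <;> simp [h0, h1]
      have hJ : cs.simple '' J = Set.range cs.simple := by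
        rw [hJu, Set.image_univ]
      rw [hJ, cs.subgroup_closure_range_simple, conjSub_top, mark_top_eq]
    · right; right; left
      have hJ : cs.simple '' J = {(sr i : DihedralGroup m)} := by
        ext y
        simp only [Set.mem_image, Set.mem_singleton_iff]
        constructor
        · rintro ⟨k, hk, rfl⟩
          fin_cases k
          · exact hs0
          · exact absurd hk h1
        · rintro rfl
          exact ⟨0, h0, hs0⟩
      rw [hJ, ← Subgroup.zpowers_eq_closure]
      obtain ⟨t', e, he, hc⟩ := conjSub_Ht g i
      rw [show Subgroup.zpowers (sr i : DihedralGroup m) = Ht i from rfl, hc]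
      exact mark_Ht_congr ⟨-e, by linear_combination -he⟩
    · right; right; right
      have hJ : cs.simple '' J = {(sr j : DihedralGroup m)} := by
        ext y
        simp only [Set.mem_image, Set.mem_singleton_iff]
        constructor
        · rintro ⟨k, hk, rfl⟩
          fin_cases k
          · exact absurd hk h0
          · exact hs1
        · rintro rfl
          exact ⟨1, h1, hs1⟩
      rw [hJ, ← Subgroup.zpowers_eq_closure]
      obtain ⟨t', e, he, hc⟩ := conjSub_Ht g j
      rw [show Subgroup.zpowers (sr j : DihedralGroup m) = Ht j from rfl, hc]
      exact mark_Ht_congr ⟨-e, by linear_combination -he⟩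
    · right; left
      have hJ : J = ∅ := by
        ext k
        fin_cases k <;> simp [h0, h1]
      rw [hJ, Set.image_empty, Subgroup.closure_empty, conjSub_bot]
  -- every element of the partial Burnside ring lies in the span
  have hspan : ∀ f ∈ R, InSpan i j f := by
    intro f hf
    refine Subring.closure_induction ?_ (InSpan_zero i j) (InSpan_one i j)
      (fun a b _ _ ha hb => InSpan_add ha hb) (fun a _ ha => InSpan_neg ha)
      (fun a b _ _ ha hb => InSpan_mul hm hd ha hb) hf
    rintro g ⟨H, hH, rfl⟩
    rcases hGen H hH with h | h | h | h <;> rw [h]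
    · exact InSpan_one i j
    · exact ⟨0, 1, 0, 0, fun K => by ring⟩
    · exact ⟨0, 0, 1, 0, fun K => by ring⟩
    · exact ⟨0, 0, 0, 1, fun K => by ring⟩
  -- the four parabolic subgroups we use
  have htopmem : (⊤ : Subgroup (DihedralGroup m)) ∈ parabolics cs :=
    ⟨Set.univ, 1, by rw [Set.image_univ, cs.subgroup_closure_range_simple, conjSub_top]⟩
  have hbotmem : (⊥ : Subgroup (DihedralGroup m)) ∈ parabolics cs :=
    ⟨∅, 1, by rw [Set.image_empty, Subgroup.closure_empty, conjSub_bot]⟩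
  have hHtimem : Ht i ∈ parabolics cs :=
    ⟨{0}, 1, by rw [Set.image_singleton, hs0, ← Subgroup.zpowers_eq_closure, conjSub_one]; rfl⟩
  have hHtjmem : Ht j ∈ parabolics cs :=
    ⟨{1}, 1, by rw [Set.image_singleton, hs1, ← Subgroup.zpowers_eq_closure, conjSub_one]; rfl⟩
  -- `uF` belongs to the ring
  have humem : uF i j ∈ R := by
    rw [uF_eq_ring]
    refine Subring.sub_mem _ (Subring.sub_mem _ (Subring.add_mem _ (Subring.one_mem _) ?_) ?_) ?_
    · exact Subring.subset_closure ⟨⊥, hbotmem, rfl⟩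
    · exact Subring.subset_closure ⟨Ht i, hHtimem, rfl⟩
    · exact Subring.subset_closure ⟨Ht j, hHtjmem, rfl⟩
  -- the nontrivial unit
  have hUsq : ((⟨uF i j, humem⟩ : R) * ⟨uF i j, humem⟩ : R) = 1 :=
    Subtype.ext (uF_sq hm hd)
  set U : Rˣ := ⟨⟨uF i j, humem⟩, ⟨uF i j, humem⟩, hUsq, hUsq⟩ with hU
  -- values of units are ±1
  have hpm : ∀ v : Rˣ, ∀ K : Subgroup (DihedralGroup m),
      ((v : R) : Subgroup (DihedralGroup m) → ℤ) K = 1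
      ∨ ((v : R) : Subgroup (DihedralGroup m) → ℤ) K = -1 := by
    intro v K
    have h2 := congrArg (fun a : R => (a : Subgroup (DihedralGroup m) → ℤ) K) v.mul_inv
    have h1 : ((v : R) : Subgroup (DihedralGroup m) → ℤ) K
        * (((v⁻¹ : Rˣ) : R) : Subgroup (DihedralGroup m) → ℤ) K = 1 := h2
    exact Int.isUnit_iff.mp (IsUnit.of_mul_eq_one _ h1)
  -- classification of units
  have hall : ∀ v : Rˣ, v = 1 ∨ v = -1 ∨ v = U ∨ v = -U := by
    intro v
    have hcl := units_classify hm hd _ (hspan _ (SetLike.coe_mem (v : R))) (hpm v)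
    have hinj : ∀ x y : Rˣ, ((x : R) : Subgroup (DihedralGroup m) → ℤ)
        = ((y : R) : Subgroup (DihedralGroup m) → ℤ) → x = y :=
      fun x y h => Units.ext (Subtype.ext h)
    rcases hcl with h | h | h | h
    · exact Or.inl (hinj v 1 (by rw [h]; rfl))
    · exact Or.inr (Or.inl (hinj v (-1) (by rw [h]; rfl)))
    · exact Or.inr (Or.inr (Or.inl (hinj v U (by rw [h]))))
    · exact Or.inr (Or.inr (Or.inr (hinj v (-U) (by rw [h]; rfl))))
  -- evaluation values of the four units
  have hUT : uF i j ⊤ = 1 := uF_val_rot i j (one_ne_zero_zmod hm) (Subgroup.mem_top _)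
  have hUI : uF i j (Ht i) = -1 := uF_val_refl hm hd i
  -- distinctness
  have hne1 : (1 : Rˣ) ≠ -1 := by
    intro h
    have hfn : (1 : Subgroup (DihedralGroup m) → ℤ) = -1 :=
      congrArg (fun v : Rˣ => ((v : R) : Subgroup (DihedralGroup m) → ℤ)) h
    have := congrFun hfn ⊤
    simp only [Pi.one_apply, Pi.neg_apply] at this
    norm_num at this
  have hneU1 : U ≠ 1 := by
    intro h
    have hfn : uF i j = (1 : Subgroup (DihedralGroup m) → ℤ) :=
      congrArg (fun v : Rˣ => ((v : R) : Subgroup (DihedralGroup m) → ℤ)) h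
    have := congrFun hfn (Ht i)
    rw [hUI, Pi.one_apply] at this
    norm_num at this
  have hneUm1 : U ≠ -1 := by
    intro h
    have hfn : uF i j = -(1 : Subgroup (DihedralGroup m) → ℤ) :=
      congrArg (fun v : Rˣ => ((v : R) : Subgroup (DihedralGroup m) → ℤ)) h
    have := congrFun hfn ⊤
    rw [hUT, Pi.neg_apply, Pi.one_apply] at this
    norm_num at this
  have hneUmU : U ≠ -U := by
    intro h
    have hfn : uF i j = -(uF i j) :=
      congrArg (fun v : Rˣ => ((v : R) : Subgroup (DihedralGroup m) → ℤ)) h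
    have := congrFun hfn ⊤
    rw [Pi.neg_apply, hUT] at this
    norm_num at this
  have hnem1mU : (-1 : Rˣ) ≠ -U := by
    intro h
    have h' : (1 : Rˣ) = U := by
      have := congrArg (fun v : Rˣ => -v) h
      simpa using this
    exact hneU1 h'.symm
  have hne1mU : (1 : Rˣ) ≠ -U := by
    intro h
    have hfn : (1 : Subgroup (DihedralGroup m) → ℤ) = -(uF i j) :=
      congrArg (fun v : Rˣ => ((v : R) : Subgroup (DihedralGroup m) → ℤ)) h
    have := congrFun hfn ⊤
    rw [Pi.one_apply, Pi.neg_apply, hUT] at this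
    norm_num at this
  -- count
  have huniv : (Set.univ : Set Rˣ) = {1, -1, U, -U} := by
    ext v
    simp only [Set.mem_univ, true_iff, Set.mem_insert_iff, Set.mem_singleton_iff]
    exact hall v
  rw [← Set.ncard_univ, huniv]
  rw [Set.ncard_insert_of_notMem (by
      simp only [Set.mem_insert_iff, Set.mem_singleton_iff]
      push_neg
      exact ⟨hne1, fun h => hneU1 h.symm, hne1mU⟩)
    ((Set.finite_singleton _).insert _ |>.insert _)]
  rw [Set.ncard_insert_of_notMem (by
      simp only [Set.mem_insert_iff, Set.mem_singleton_iff]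
      push_neg
      exact ⟨fun h => hneUm1 h.symm, hnem1mU⟩)
    ((Set.finite_singleton _).insert _)]
  rw [Set.ncard_pair hneUmU]
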